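/- arXiv:2306.08481 — 2 statements merged into one kernel-verified Lean document; each statement's English description precedes it below -/
import Mathlib

section
/- Let K be a field, V a finite-dimensional K-vector space, and v_1,…,v_n ∈ V. Suppose the nonzero vectors among the v_i are partitioned by the relation i ∼ j ⟺ K·v_i = K·v_j into equivalence classes E_1,…,E_q of sizes ≥ 2 (the proper classes) together with singleton classes, and let E_0 = { i : v_i = 0 }. Assume that span_K(v_1,…,v_n) = W and that for each proper class, all its vectors are pairwise nonzero scalar multiples of each other such that differences v_i − v_j lie in W for i,j in the same class with v_i = v_j. If Z ⊆ {1,…,n} is such that the images of { e_i : i ∉ Z } span K^n / U, where U = span of the relations, then Z contains no index i with v_i a 'basic' vector, i.e., an index whose class is a singleton with v_i ≠ 0. -/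
/-!
Suppose `i ∈ Z`. The classes of the `e_k` with `k ∉ Z` span `K^n / U`, so `U` cannot lie in the
kernel of the `i`-th coordinate: otherwise that coordinate would descend to a functional on
`K^n / U` that is `1` on the class of `e_i` and `0` on those of all other `e_k`. Hence some
binomial generator `g = α e_i + β e_j` of `U` has `α ≠ 0`. The relation `α [e_i] = -β [e_j]` in
`K^n / U` then makes `[e_i]` either zero or proportional to `[e_j]` with `j ≠ i`, which is
exactly what a basic index excludes.
-/

namespace Submodule

variable {K ι : Type*} [Field K] [DecidableEq ι] {U : Submodule K (ι → K)} {i : ι}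

theorem mkQ_single_notMem_span_of_le_ker_proj {κ : Type*}
    (hU : U ≤ LinearMap.ker (LinearMap.proj i)) (f : κ → ι) (hf : ∀ k, f k ≠ i) :
    U.mkQ (Pi.single i 1) ∉ span K (Set.range fun k => U.mkQ (Pi.single (f k) 1)) := by
  set φ := U.liftQ (LinearMap.proj i) hU
  have hspan : span K (Set.range fun k => U.mkQ (Pi.single (f k) 1)) ≤ LinearMap.ker φ := by
    rw [span_le]
    rintro _ ⟨k, rfl⟩
    simp [φ, Pi.single_eq_of_ne (hf k).symm]
  intro hmem
  simpa [φ] using hspan hmem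

theorem mkQ_single_eq_zero_of_mem {g : ι → K} (hgU : g ∈ U) (hgi : g i ≠ 0)
    (hg : ∀ k, k ≠ i → g k = 0) : U.mkQ (Pi.single i 1) = 0 := by
  have hg_eq : g = g i • Pi.single i 1 := by
    ext k
    by_cases hk : k = i
    · subst hk; simp
    · simp [hg k hk, hk]
  have : g i • U.mkQ (Pi.single i 1) = 0 := by
    rw [← map_smul, ← hg_eq, mkQ_apply, Quotient.mk_eq_zero]
    exact hgU
  exact (smul_eq_zero.mp this).resolve_left hgi

theorem mkQ_single_eq_smul_of_mem {g : ι → K} (hgU : g ∈ U) (hgi : g i ≠ 0) {j : ι}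
    (hji : j ≠ i) (hg : ∀ k, k ≠ i → k ≠ j → g k = 0) :
    U.mkQ (Pi.single i 1) = (-(g j / g i)) • U.mkQ (Pi.single j 1) := by
  have hg_eq : g = g i • Pi.single i 1 + g j • Pi.single j 1 := by
    ext k
    by_cases hk : k = i
    · subst hk; simp [hji]
    · by_cases hk' : k = j
      · subst hk'; simp [hk]
      · simp [hg k hk hk', hk, hk']
  have hrel : g i • U.mkQ (Pi.single i 1) + g j • U.mkQ (Pi.single j 1) = 0 := by
    rw [← map_smul, ← map_smul, ← map_add, ← hg_eq, mkQ_apply, Quotient.mk_eq_zero]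
    exact hgU
  rw [neg_smul, div_eq_inv_mul, mul_smul, ← smul_neg, ← eq_neg_of_add_eq_zero_left hrel,
    inv_smul_smul₀ hgi]

theorem apply_eq_zero_of_mem_of_basic (hi0 : U.mkQ (Pi.single i 1) ≠ 0)
    (hibasic : ∀ j, j ≠ i → span K {U.mkQ (Pi.single i 1)} ≠ span K {U.mkQ (Pi.single j 1)})
    {g : ι → K} (hgU : g ∈ U) {a b : ι} (hg : ∀ k, k ≠ a → k ≠ b → g k = 0) :
    g i = 0 := by
  by_contra hgi
  obtain ⟨j, hsupp⟩ : ∃ j, ∀ k, k ≠ i → k ≠ j → g k = 0 := by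
    by_cases hia : i = a
    · exact ⟨b, hia ▸ hg⟩
    · have hib : i = b := by_contra fun hib => hgi (hg i hia hib)
      exact ⟨a, fun k hki hka => hg k hka (hib ▸ hki)⟩
  by_cases hji : j = i
  · exact hi0 (mkQ_single_eq_zero_of_mem hgU hgi fun k hk => hsupp k hk (hji ▸ hk))
  · have hrel := mkQ_single_eq_smul_of_mem hgU hgi hji hsupp
    have hj0 : g j ≠ 0 := fun hj0 => hi0 (by simp [hrel, hj0])
    apply hibasic j hji
    rw [hrel, span_singleton_smul_eq (neg_ne_zero.mpr (div_ne_zero hj0 hgi)).isUnit]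

end Submodule

/-- If `U ⊆ K^n` is spanned by binomial vectors (supported on at most two
coordinates) and `i` is a basic index (nonzero residue class, not proportional
to any other residue class), then `i` belongs to no set `Z` for which the
classes of `e_k`, `k ∉ Z`, span `K^n / U`. -/
theorem stmt_5 {K : Type*} [Field K] {n : ℕ}
    (U : Submodule K (Fin n → K))
    (hbin : ∃ G : Set (Fin n → K), U = Submodule.span K G ∧
      ∀ w ∈ G, ∃ a b : Fin n, ∀ j, j ≠ a → j ≠ b → w j = 0)
    (i : Fin n)
    (hi0 : U.mkQ (Pi.single i (1 : K)) ≠ 0)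
    (hibasic : ∀ j : Fin n, j ≠ i →
      Submodule.span K {U.mkQ (Pi.single i (1 : K))} ≠
        Submodule.span K {U.mkQ (Pi.single j (1 : K))})
    (Z : Finset (Fin n))
    (hZ : Submodule.span K
        (Set.range fun k : {k : Fin n // k ∉ Z} =>
          U.mkQ (Pi.single (k : Fin n) (1 : K))) = ⊤) :
    i ∉ Z := by
  intro hiZ
  obtain ⟨G, hUG, hG⟩ := hbin
  have hU : U ≤ LinearMap.ker (LinearMap.proj i) := by
    rw [hUG, Submodule.span_le]
    intro g hg
    obtain ⟨a, b, hab⟩ := hG g hg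
    exact Submodule.apply_eq_zero_of_mem_of_basic hi0 hibasic
      (hUG ▸ Submodule.subset_span hg) hab
  refine Submodule.mkQ_single_notMem_span_of_le_ker_proj hU Subtype.val ?_
    (hZ ▸ Submodule.mem_top)
  rintro ⟨k, hkZ⟩ rfl
  exact hkZ hiZ
end

section
/- Let K be a field and A ∈ Mat_{s,n}(K) with rank s. Then there exists at least one s-element subset S ⊆ {1,…,n} such that the s×s submatrix A_S (columns indexed by S) is invertible; consequently the Gröbner fan of a linear ideal generated by s linearly independent linear forms is nonempty and its cardinality equals the number of invertible maximal square submatrices of A. -/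
/-!
Let `R` be the row space of `A`, of dimension `s`. The `s × s` minor on the columns `S` is
nonzero iff the restriction to `R` of the projection onto the coordinates in `S` is injective,
i.e. iff `R` meets the coordinate subspace spanned by `e_j, j ∉ S`, trivially; by counting
dimensions this says that this coordinate subspace is a complement of `R`. Likewise, the images
of `e_j, j ∈ B`, form a basis of `Kⁿ / R` iff the coordinate subspace of `B` is a complement of
`R`. So `S ↦ Sᶜ` matches the two sets, and a coordinate complement exists because a basis of
`Kⁿ / R` can be chosen among the images of the standard basis vectors.
-/

open Submodule Module

section Quotient

variable {K V ι : Type*} [Field K] [AddCommGroup V] [Module K V]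

theorem isCompl_iff_disjoint_and_finrank_add_eq [FiniteDimensional K V] {U W : Submodule K V} :
    IsCompl U W ↔ Disjoint U W ∧ finrank K U + finrank K W = finrank K V :=
  ⟨fun h => ⟨h.disjoint, finrank_add_eq_of_isCompl h⟩,
    fun ⟨h, hdim⟩ => (isCompl_iff_disjoint U W hdim.ge).2 h⟩

theorem linearIndependent_mkQ_comp_and_span_eq_top_iff (R : Submodule K V) {w : ι → V}
    (hw : LinearIndependent K w) :
    (LinearIndependent K (R.mkQ ∘ w) ∧ span K (Set.range (R.mkQ ∘ w)) = ⊤) ↔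
      IsCompl R (span K (Set.range w)) := by
  rw [isCompl_iff, codisjoint_iff, Set.range_comp, span_image, map_mkQ_eq_top, disjoint_comm]
  refine and_congr_left' ⟨fun h => ?_, fun h => hw.map (by rwa [ker_mkQ])⟩
  simpa using range_ker_disjoint h

theorem exists_isCompl_span_image (b : Basis ι K V) (R : Submodule K V) :
    ∃ B : Set ι, IsCompl R (span K (b '' B)) := by
  obtain ⟨B, -, -, hspan, hli⟩ := exists_linearIndepOn_extension (v := R.mkQ ∘ b)
    (linearIndepOn_empty K _) (Set.empty_subset Set.univ)
  refine ⟨B, ?_⟩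
  have hw : LinearIndependent K (b ∘ Subtype.val : B → V) :=
    b.linearIndependent.comp _ Subtype.val_injective
  rw [← Subtype.range_coe (s := B), ← Set.range_comp,
    ← linearIndependent_mkQ_comp_and_span_eq_top_iff R hw]
  refine ⟨hli, eq_top_iff.2 ?_⟩
  calc ⊤ = span K ((R.mkQ ∘ b) '' Set.univ) := by
        rw [Set.image_univ, Set.range_comp, span_image, b.span_eq, Submodule.map_top, range_mkQ]
    _ ≤ span K ((R.mkQ ∘ b) '' B) := span_le.2 hspan
    _ = span K (Set.range (R.mkQ ∘ b ∘ Subtype.val)) := by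
        rw [Set.image_eq_range]; rfl

end Quotient

section Coordinates

variable {K ι m : Type*} [Field K] [Finite ι]

theorem ker_funLeft_eq_spanSubset (g : m → ι) :
    LinearMap.ker (LinearMap.funLeft K K g) = Pi.spanSubset K (Set.range g)ᶜ := by
  ext v
  simp [Pi.mem_spanSubset_iff, funext_iff]

theorem isUnit_det_submatrix_iff_disjoint [Fintype m] [DecidableEq m] {A : Matrix m ι K}
    (hA : LinearIndependent K A) (g : m → ι) :
    IsUnit (A.submatrix id g).det ↔
      Disjoint (span K (Set.range A)) (Pi.spanSubset K (Set.range g)ᶜ) := by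
  have hrows : (A.submatrix id g).row = LinearMap.funLeft K K g ∘ A := rfl
  rw [← Matrix.isUnit_iff_isUnit_det, ← Matrix.linearIndependent_rows_iff_isUnit, hrows,
    ← ker_funLeft_eq_spanSubset]
  exact ⟨range_ker_disjoint, hA.map⟩

end Coordinates

section Finset

variable {K ι : Type*} [Field K] [Fintype ι]

theorem exists_isUnit_det_submatrix_orderIsoOfFin_iff [LinearOrder ι] {s : ℕ}
    {A : Matrix (Fin s) ι K} (hA : LinearIndependent K A) (S : Finset ι) :
    (∃ h : S.card = s, IsUnit (A.submatrix id (fun j => (S.orderIsoOfFin h j : ι))).det) ↔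
      IsCompl (span K (Set.range A)) (Pi.spanSubset K ↑Sᶜ) := by
  have hR : finrank K (span K (Set.range A)) = s := by simpa using finrank_span_eq_card hA
  have hS : finrank K (Pi.spanSubset K (↑Sᶜ : Set ι)) = Fintype.card ι - S.card := by
    rw [Pi.dim_spanSubset, Set.ncard_coe_finset, Finset.card_compl]
  have hSle : S.card ≤ Fintype.card ι := S.card_le_univ
  rw [isCompl_iff_disjoint_and_finrank_add_eq, hR, hS, finrank_fintype_fun_eq_card]
  have hminor : ∀ h : S.card = s,
      IsUnit (A.submatrix id (fun j => (S.orderIsoOfFin h j : ι))).det ↔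
        Disjoint (span K (Set.range A)) (Pi.spanSubset K ↑Sᶜ) := fun h => by
    rw [isUnit_det_submatrix_iff_disjoint hA, Finset.coe_compl]
    simp
  constructor
  · rintro ⟨h, hu⟩
    exact ⟨(hminor h).1 hu, by omega⟩
  · rintro ⟨hdisj, hdim⟩
    have h : S.card = s := by omega
    exact ⟨h, (hminor h).2 hdisj⟩

theorem card_eq_and_basis_mkQ_single_iff [DecidableEq ι] (R : Submodule K (ι → K))
    (B : Finset ι) :
    (B.card = Fintype.card ι - finrank K R ∧
      LinearIndependent K (fun j : B => R.mkQ (Pi.single (j : ι) (1 : K))) ∧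
      span K (Set.range fun j : B => R.mkQ (Pi.single (j : ι) (1 : K))) = ⊤) ↔
      IsCompl R (Pi.spanSubset K ↑B) := by
  have hw : LinearIndependent K (fun j : B => (Pi.single (j : ι) (1 : K) : ι → K)) := by
    convert (Pi.basisFun K ι).linearIndependent.comp _ Subtype.val_injective using 1
    simp [Function.comp_def]
  have hrange :
      Set.range (fun j : B => (Pi.single (j : ι) (1 : K) : ι → K)) = Pi.basisFun K ι '' B := by
    simp [Set.image_eq_range]
  have hiff := linearIndependent_mkQ_comp_and_span_eq_top_iff R hw
  rw [hrange, ← Pi.spanSubset] at hiff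
  refine ⟨fun h => hiff.1 h.2, fun h => ⟨?_, hiff.2 h⟩⟩
  have hdim := finrank_add_eq_of_isCompl h
  rw [Pi.dim_spanSubset, Set.ncard_coe_finset, finrank_fintype_fun_eq_card] at hdim
  omega

end Finset

/-- A matrix with `s` linearly independent rows has at least one invertible
`s × s` submatrix of columns; consequently the Gröbner fan of the linear
ideal (identified via the complements projecting to bases of the quotient)
is nonempty and its cardinality equals the number of nonzero maximal minors. -/
theorem stmt_19 {K : Type*} [Field K] {s n : ℕ}
    (A : Matrix (Fin s) (Fin n) K) (hA : LinearIndependent K A) :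
    {S : Finset (Fin n) | ∃ h : S.card = s,
        IsUnit (A.submatrix id
          (fun j : Fin s => ((S.orderIsoOfFin h j : S) : Fin n))).det}.Nonempty ∧
      Set.ncard {B : Finset (Fin n) | B.card = n - s ∧
          LinearIndependent K
            (fun j : {j : Fin n // j ∈ B} =>
              (Submodule.span K (Set.range A)).mkQ (Pi.single (j : Fin n) (1 : K))) ∧
          Submodule.span K
            (Set.range fun j : {j : Fin n // j ∈ B} =>
              (Submodule.span K (Set.range A)).mkQ (Pi.single (j : Fin n) (1 : K))) = ⊤} =
        Set.ncard {S : Finset (Fin n) | ∃ h : S.card = s,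
          IsUnit (A.submatrix id
            (fun j : Fin s => ((S.orderIsoOfFin h j : S) : Fin n))).det} := by
  classical
  set R := span K (Set.range A)
  have hR : finrank K R = s := by simpa using finrank_span_eq_card hA
  have hfan : {B : Finset (Fin n) | B.card = n - s ∧
      LinearIndependent K (fun j : B => R.mkQ (Pi.single (j : Fin n) (1 : K))) ∧
      span K (Set.range fun j : B => R.mkQ (Pi.single (j : Fin n) (1 : K))) = ⊤} =
      {B : Finset (Fin n) | IsCompl R (Pi.spanSubset K ↑B)} := by
    ext B
    simpa [hR] using card_eq_and_basis_mkQ_single_iff R B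
  have hminors : {S : Finset (Fin n) | ∃ h : S.card = s,
      IsUnit (A.submatrix id (fun j : Fin s => ((S.orderIsoOfFin h j : S) : Fin n))).det} =
      compl ⁻¹' {B : Finset (Fin n) | IsCompl R (Pi.spanSubset K ↑B)} := by
    ext S
    exact exists_isUnit_det_submatrix_orderIsoOfFin_iff hA S
  rw [hfan, hminors]
  refine ⟨?_, ?_⟩
  · obtain ⟨B, hB⟩ := exists_isCompl_span_image (Pi.basisFun K (Fin n)) R
    exact ⟨B.toFinsetᶜ, by simpa [Pi.spanSubset] using hB⟩
  · rw [← compl_involutive.image_eq_preimage_symm, Set.ncard_image_of_injective _ compl_injective]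
end
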